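/- Let v be a spiking neuron with d input neurons. If S, T ⊆ {1,…,d} are causal subsets corresponding to two linear regions R^S, R^T of the firing-time map, and there is a boundary point that lies in the closure of both regions and can be crossed without leaving R^S ∪ R^T, then S ⊆ T or T ⊆ S. In other words, adjacent linear regions correspond to nested causal subsets. -/
import Mathlib


/-- Firing time of the output neuron when the causal subset of input neurons is `S`. -/
noncomputable def fireTime {d : ℕ} (w dl : Fin d → ℝ) (θ : ℝ) (S : Finset (Fin d))
    (x : Fin d → ℝ) : ℝ :=
  (θ + ∑ i ∈ S, w i * (x i + dl i)) / (∑ i ∈ S, w i)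

/-- The region `R^S` of input firing-time vectors for which exactly the neurons
in `S` cause the spike. -/
def inRegion {d : ℕ} (w dl : Fin d → ℝ) (θ : ℝ) (S : Finset (Fin d)) (x : Fin d → ℝ) : Prop :=
  (∀ k ∈ S, x k + dl k < fireTime w dl θ S x) ∧
  (∀ k ∉ S, fireTime w dl θ S x ≤ x k + dl k)

lemma fireTime_continuous {d : ℕ} (w dl : Fin d → ℝ) (θ : ℝ) (U : Finset (Fin d)) :
    Continuous fun x : Fin d → ℝ => fireTime w dl θ U x := by
  unfold fireTime
  exact (continuous_const.add (continuous_finset_sum _ fun i _ =>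
    continuous_const.mul ((continuous_apply i).add continuous_const))).div_const _

/-- if two linear regions `R^S`, `R^T` of the firing-time map of a
spiking neuron share a boundary point that can be crossed without leaving
`R^S ∪ R^T`, then `S ⊆ T` or `T ⊆ S`: adjacent regions have nested causal sets. -/
theorem stmt3 {d : ℕ} (w dl : Fin d → ℝ) (θ : ℝ) (hθ : 0 < θ) (hdl : ∀ i, 0 ≤ dl i)
    (S T : Finset (Fin d)) (hS : S.Nonempty) (hT : T.Nonempty)
    (hwS : 0 < ∑ i ∈ S, w i) (hwT : 0 < ∑ i ∈ T, w i)
    (tstar : Fin d → ℝ)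
    (hclS : tstar ∈ closure {x | inRegion w dl θ S x})
    (hclT : tstar ∈ closure {x | inRegion w dl θ T x})
    (hcross : ∃ ε > 0, Metric.ball tstar ε ⊆
      {x | inRegion w dl θ S x} ∪ {x | inRegion w dl θ T x}) :
    S ⊆ T ∨ T ⊆ S := by
  by_contra hcon
  push_neg at hcon
  obtain ⟨hST, hTS⟩ := hcon
  obtain ⟨a, haS, haT⟩ := Finset.not_subset.mp hST
  obtain ⟨b, hbT, hbS⟩ := Finset.not_subset.mp hTS
  have hca : Continuous fun x : Fin d → ℝ => x a + dl a :=
    (continuous_apply a).add continuous_const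
  have hcb : Continuous fun x : Fin d → ℝ => x b + dl b :=
    (continuous_apply b).add continuous_const
  -- weak inequalities at tstar from closure membership
  have h1 : tstar a + dl a ≤ fireTime w dl θ S tstar :=
    closure_minimal (fun x hx => le_of_lt (hx.1 a haS))
      (isClosed_le hca (fireTime_continuous w dl θ S)) hclS
  have h2 : fireTime w dl θ T tstar ≤ tstar a + dl a :=
    closure_minimal (fun x hx => hx.2 a haT)
      (isClosed_le (fireTime_continuous w dl θ T) hca) hclT
  have h3 : tstar b + dl b ≤ fireTime w dl θ T tstar :=
    closure_minimal (fun x hx => le_of_lt (hx.1 b hbT))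
      (isClosed_le hcb (fireTime_continuous w dl θ T)) hclT
  have h4 : fireTime w dl θ S tstar ≤ tstar b + dl b :=
    closure_minimal (fun x hx => hx.2 b hbS)
      (isClosed_le (fireTime_continuous w dl θ S) hcb) hclS
  obtain ⟨ε, hε, hball⟩ := hcross
  have htmem : tstar ∈ Metric.ball tstar ε := Metric.mem_ball_self hε
  rcases hball htmem with hx | hx
  · have := hx.1 a haS
    linarith
  · have := hx.1 b hbT
    linarith
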